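/- Let J = ⟨g₁,…,gₙ⟩ be a grid ideal in P (each gᵢ a monic univariate polynomial in xᵢ of degree dᵢ ≥ 1), let s = (d₁−1,…,dₙ−1) be the exponent vector of t_soc(J) = x₁^{d₁−1}···xₙ^{dₙ−1}, let I₁, I₂ be ideals of P with I₁ ∩ I₂ = J and I₁ + I₂ = (1), and let σ be a monomial order. Then the map t ↦ s − t (componentwise subtraction) is a bijection from the set {t : t ≤ s componentwise and X^t ∈ LT_σ(I₁)} onto the set {u : X^u ∉ LT_σ(I₂)}. -/

import Mathlib

open MvPolynomial

/-- The leading monomial (σ-largest exponent vector in the support) of a polynomial. -/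
noncomputable def leadMonomial {n : ℕ} {K : Type*} [Field K]
    (m : MonomialOrder (Fin n)) (f : MvPolynomial (Fin n) K) : Fin n →₀ ℕ :=
  m.toSyn.symm (f.support.sup fun s => m.toSyn s)

/-- The leading term ideal of an ideal. -/
noncomputable def leadTermIdeal {n : ℕ} {K : Type*} [Field K]
    (m : MonomialOrder (Fin n)) (I : Ideal (MvPolynomial (Fin n) K)) :
    Ideal (MvPolynomial (Fin n) K) :=
  Ideal.span {g | ∃ f ∈ I, f ≠ 0 ∧ g = monomial (leadMonomial m f) (1 : K)}

open MonomialOrder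

/-!
The generators `gᵢ = hᵢ(xᵢ)` of the grid ideal `J` have leading monomials `xᵢ^{dᵢ}`, and division
by them leaves a remainder supported in the box `{u | u ≤ s}`. Box monomials are linearly
independent modulo `J` (induction on `n`, reducing modulo `h₀` in the first variable), so the
remainder of an element of `J` vanishes: every nonzero `f ∈ J` has a leading monomial outside the
box, and `dim P/J ≤ #box`.

For any ideal `I`, the standard monomials (those outside `LT_σ(I)`) are linearly independent
modulo `I`. For `I ⊇ J` they lie in the box, and by the Chinese remainder theorem
`#std(I₁) + #std(I₂) ≤ dim P/I₁ + dim P/I₂ = dim P/J ≤ #box`. If `X^t ∈ LT_σ(I₁)` and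
`X^{s-t} ∈ LT_σ(I₂)`, the product of two witnesses lies in `I₁ ∩ I₂ = J` and has leading
monomial `≤ s`, which is impossible. Hence `t ↦ s - t` injects `box ∖ std(I₁)` into `std(I₂)`,
and the count forces it to be onto.
-/

theorem Set.surjOn_of_injOn_of_ncard_le {α β : Type*} {f : α → β} {s : Set α} {t : Set β}
    (hmaps : Set.MapsTo f s t) (hinj : Set.InjOn f s) (hcard : t.ncard ≤ s.ncard)
    (ht : t.Finite) : Set.SurjOn f s t := fun b hb =>
  let ⟨a, ha, hab⟩ := Set.surj_on_of_inj_on_of_ncard_le (fun a _ => f a) hmaps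
    (fun _ _ ha₁ ha₂ => hinj ha₁ ha₂) hcard ht b hb
  ⟨a, ha, hab.symm⟩

theorem finrank_quotient_inf_eq_add {K A : Type*} [Field K] [CommRing A] [Algebra K A]
    {I₁ I₂ : Ideal A} (hcop : IsCoprime I₁ I₂) [Module.Finite K (A ⧸ I₁)]
    [Module.Finite K (A ⧸ I₂)] :
    Module.finrank K (A ⧸ (I₁ ⊓ I₂)) = Module.finrank K (A ⧸ I₁) + Module.finrank K (A ⧸ I₂) := by
  let e : (A ⧸ (I₁ ⊓ I₂)) ≃ₐ[K] (A ⧸ I₁) × (A ⧸ I₂) :=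
    AlgEquiv.ofRingEquiv (f := Ideal.quotientInfEquivQuotientProd I₁ I₂ hcop) fun x => by
      ext
      · rw [Ideal.quotientInfEquivQuotientProd_fst]
        rfl
      · rw [Ideal.quotientInfEquivQuotientProd_snd]
        rfl
  rw [e.toLinearEquiv.finrank_eq, Module.finrank_prod]

variable {n : ℕ}

section AevalX

variable {σ R : Type*} [CommSemiring R] (p : Polynomial R) (i : σ)

theorem aeval_X_eq_sum_monomial :
    Polynomial.aeval (X i : MvPolynomial σ R) p =
      p.sum fun k a => monomial (Finsupp.single i k) a := by
  simp [Polynomial.aeval_def, Polynomial.eval₂_eq_sum, C_mul_X_pow_eq_monomial]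

theorem coeff_single_aeval_X (k : ℕ) :
    coeff (Finsupp.single i k) (Polynomial.aeval (X i : MvPolynomial σ R) p) = p.coeff k := by
  classical
  rw [aeval_X_eq_sum_monomial, Polynomial.sum_def, coeff_sum]
  simp only [coeff_monomial, (Finsupp.single_injective i).eq_iff, Finset.sum_ite_eq']
  split_ifs with hk
  · rfl
  · exact (Polynomial.notMem_support_iff.1 hk).symm

theorem exists_eq_single_of_mem_support_aeval_X {u : σ →₀ ℕ}
    (hu : u ∈ (Polynomial.aeval (X i : MvPolynomial σ R) p).support) :
    ∃ k ≤ p.natDegree, u = Finsupp.single i k := by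
  classical
  rw [mem_support_iff, aeval_X_eq_sum_monomial, Polynomial.sum_def, coeff_sum] at hu
  obtain ⟨k, hk, hne⟩ := Finset.exists_ne_zero_of_sum_ne_zero hu
  rw [coeff_monomial] at hne
  exact ⟨k, Polynomial.le_natDegree_of_mem_supp k hk, (ite_ne_right_iff.1 hne).1.symm⟩

theorem MonomialOrder.degree_aeval_X (m : MonomialOrder σ) :
    m.degree (Polynomial.aeval (X i : MvPolynomial σ R) p) = Finsupp.single i p.natDegree := by
  rcases eq_or_ne p 0 with rfl | hp
  · simp
  apply m.toSyn.injective
  apply le_antisymm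
  · refine m.degree_le_iff.2 fun u hu => ?_
    obtain ⟨k, hk, rfl⟩ := exists_eq_single_of_mem_support_aeval_X p i hu
    exact m.toSyn_monotone (Finsupp.single_le_single.2 hk)
  · apply m.le_degree
    rw [mem_support_iff, coeff_single_aeval_X]
    exact Polynomial.leadingCoeff_ne_zero.2 hp

theorem MonomialOrder.leadingCoeff_aeval_X (m : MonomialOrder σ) :
    m.leadingCoeff (Polynomial.aeval (X i : MvPolynomial σ R) p) = p.leadingCoeff := by
  rw [MonomialOrder.leadingCoeff, m.degree_aeval_X, coeff_single_aeval_X,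
    Polynomial.leadingCoeff]

end AevalX

section GridIdeal

variable {R : Type*} [CommRing R]

noncomputable def gridIdeal (h : Fin n → Polynomial R) : Ideal (MvPolynomial (Fin n) R) :=
  Ideal.span (Set.range fun i => Polynomial.aeval (X i) (h i))

def gridBox (h : Fin n → Polynomial R) : Set (Fin n →₀ ℕ) :=
  {u | ∀ i, u i < (h i).natDegree}

theorem finite_gridBox (h : Fin n → Polynomial R) : (gridBox h).Finite :=
  (Set.finite_Iic (Finsupp.equivFunOnFinite.symm fun i => (h i).natDegree)).subset
    fun _ hu i => (hu i).le

theorem dvd_map_finSuccEquiv_of_mem_gridIdeal (h : Fin (n + 1) → Polynomial R)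
    {f : MvPolynomial (Fin (n + 1)) R} (hf : f ∈ gridIdeal h) :
    (h 0).map (algebraMap R (MvPolynomial (Fin n) R ⧸ gridIdeal (h ∘ Fin.succ))) ∣
      (finSuccEquiv R n f).map (Ideal.Quotient.mk (gridIdeal (h ∘ Fin.succ))) := by
  let π := Ideal.Quotient.mkₐ R (gridIdeal (h ∘ Fin.succ))
  let ψ := (Polynomial.mapAlgHom π).comp (finSuccEquiv R n).toAlgHom
  have hψ : ∀ q, (finSuccEquiv R n q).map (Ideal.Quotient.mk _) = ψ q := fun q => by
    simp only [ψ, π, AlgHom.comp_apply, Polynomial.coe_mapAlgHom]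
    rfl
  simp only [hψ]
  induction hf using Submodule.span_induction with
  | zero => simp
  | add x y _ _ hx hy => simpa using dvd_add hx hy
  | smul a x _ hx => simpa using hx.mul_left (ψ a)
  | mem x hx =>
    obtain ⟨i, rfl⟩ := hx
    rw [← Polynomial.aeval_algHom_apply]
    induction i using Fin.cases with
    | zero =>
      have : ψ (X 0) = Polynomial.X := by simp [ψ, finSuccEquiv_X_zero]
      rw [this, ← Polynomial.aeval_map_algebraMap
        (MvPolynomial (Fin n) R ⧸ gridIdeal (h ∘ Fin.succ)), Polynomial.aeval_X_left_apply]
    | succ i =>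
      have : ψ (X i.succ) = Polynomial.CAlgHom (R := R) (π (X i)) := by
        simp [ψ, finSuccEquiv_X_succ]
      rw [this, Polynomial.aeval_algHom_apply, Polynomial.aeval_algHom_apply]
      have : Polynomial.aeval (X i) (h i.succ) ∈ gridIdeal (h ∘ Fin.succ) :=
        Ideal.subset_span ⟨i, rfl⟩
      simp [π, Ideal.Quotient.eq_zero_iff_mem.2 this]

theorem eq_zero_of_mem_gridIdeal_of_support_subset_gridBox {h : Fin n → Polynomial R}
    (hmonic : ∀ i, (h i).Monic) {f : MvPolynomial (Fin n) R} (hf : f ∈ gridIdeal h)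
    (hbox : ↑f.support ⊆ gridBox h) : f = 0 := by
  induction n with
  | zero => simpa [gridIdeal] using hf
  | succ n ih =>
    have hcoeff_box : ∀ k u, coeff u ((finSuccEquiv R n f).coeff k) ≠ 0 →
        k < (h 0).natDegree ∧ u ∈ gridBox (h ∘ Fin.succ) := by
      intro k u hu
      rw [finSuccEquiv_coeff_coeff] at hu
      have := hbox (mem_support_iff.2 hu)
      exact ⟨by simpa using this 0, fun i => by simpa using this i.succ⟩
    have hmap_eq_zero :
        (finSuccEquiv R n f).map (Ideal.Quotient.mk (gridIdeal (h ∘ Fin.succ))) = 0 := by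
      rcases subsingleton_or_nontrivial (MvPolynomial (Fin n) R ⧸ gridIdeal (h ∘ Fin.succ))
      · exact Subsingleton.elim _ _
      by_contra hne
      refine ((hmonic 0).map _).not_dvd_of_natDegree_lt hne ?_
        (dvd_map_finSuccEquiv_of_mem_gridIdeal h hf)
      rw [(hmonic 0).natDegree_map, Polynomial.natDegree_lt_iff_degree_lt hne,
        Polynomial.degree_lt_iff_coeff_zero]
      intro k hk
      have : (finSuccEquiv R n f).coeff k = 0 := by
        ext u
        by_contra hu
        exact (hcoeff_box k u hu).1.not_ge hk
      rw [Polynomial.coeff_map, this, map_zero]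
    have hcoeff_eq_zero : ∀ k, (finSuccEquiv R n f).coeff k = 0 := by
      intro k
      refine ih (h := h ∘ Fin.succ) (fun i => hmonic i.succ) ?_ ?_
      · rw [← Ideal.Quotient.eq_zero_iff_mem, ← Polynomial.coeff_map, hmap_eq_zero,
          Polynomial.coeff_zero]
      · exact fun u hu => (hcoeff_box k u (mem_support_iff.1 hu)).2
    apply (finSuccEquiv R n).injective
    ext k : 1
    simp [hcoeff_eq_zero]

theorem exists_eq_linearCombination_add_of_support_subset_gridBox (m : MonomialOrder (Fin n))
    {h : Fin n → Polynomial R} (hmonic : ∀ i, (h i).Monic) (f : MvPolynomial (Fin n) R) :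
    ∃ (q : Fin n →₀ MvPolynomial (Fin n) R) (r : MvPolynomial (Fin n) R),
      f = Finsupp.linearCombination _ (fun i => Polynomial.aeval (X i) (h i)) q + r ∧
      (∀ i, m.degree (Polynomial.aeval (X i) (h i) * q i) ≼[m] m.degree f) ∧
      ↑r.support ⊆ gridBox h := by
  have hunit : ∀ i, IsUnit (m.leadingCoeff (Polynomial.aeval (X i) (h i))) := fun i => by
    rw [leadingCoeff_aeval_X, (hmonic i).leadingCoeff]
    exact isUnit_one
  obtain ⟨q, r, hf, hdeg, hr⟩ := m.div hunit f
  refine ⟨q, r, hf, hdeg, fun u hu i => ?_⟩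
  have := hr u hu i
  rwa [degree_aeval_X, Finsupp.single_le_iff, not_le] at this

theorem linearCombination_mem_gridIdeal (h : Fin n → Polynomial R)
    (q : Fin n →₀ MvPolynomial (Fin n) R) :
    Finsupp.linearCombination _ (fun i => Polynomial.aeval (X i) (h i)) q ∈ gridIdeal h := by
  change _ ∈ Submodule.span _ _
  rw [← Finsupp.range_linearCombination]
  exact LinearMap.mem_range_self _ q

theorem exists_sub_mem_gridIdeal_of_support_subset_gridBox {h : Fin n → Polynomial R}
    (hmonic : ∀ i, (h i).Monic) (f : MvPolynomial (Fin n) R) :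
    ∃ r, f - r ∈ gridIdeal h ∧ ↑r.support ⊆ gridBox h := by
  obtain ⟨q, r, hf, -, hr⟩ :=
    exists_eq_linearCombination_add_of_support_subset_gridBox MonomialOrder.lex hmonic f
  refine ⟨r, ?_, hr⟩
  rw [hf, add_sub_cancel_right]
  exact linearCombination_mem_gridIdeal h q

theorem exists_natDegree_le_degree_of_mem_gridIdeal (m : MonomialOrder (Fin n))
    {h : Fin n → Polynomial R} (hmonic : ∀ i, (h i).Monic) {f : MvPolynomial (Fin n) R}
    (hf : f ∈ gridIdeal h) (hf0 : f ≠ 0) : ∃ i, (h i).natDegree ≤ m.degree f i := by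
  obtain ⟨q, r, hfqr, hdeg, hr⟩ :=
    exists_eq_linearCombination_add_of_support_subset_gridBox m hmonic f
  have hr0 : r = 0 := by
    refine eq_zero_of_mem_gridIdeal_of_support_subset_gridBox hmonic ?_ hr
    rw [show r = f - Finsupp.linearCombination _ _ q by rw [hfqr, add_sub_cancel_left]]
    exact sub_mem hf (linearCombination_mem_gridIdeal h q)
  rw [hr0, add_zero, Finsupp.linearCombination_apply] at hfqr
  have hlead : coeff (m.degree f) f ≠ 0 := m.coeff_degree_ne_zero_iff.2 hf0
  nth_rw 2 [hfqr] at hlead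
  rw [Finsupp.sum, coeff_sum] at hlead
  obtain ⟨i, -, hi⟩ := Finset.exists_ne_zero_of_sum_ne_zero hlead
  change coeff _ (q i * _) ≠ 0 at hi
  rw [mul_comm] at hi
  have hqi : q i ≠ 0 := by rintro h0; simp [h0] at hi
  have hdeg_eq : m.degree (Polynomial.aeval (X i) (h i) * q i) = m.degree f :=
    m.toSyn.injective <| le_antisymm (hdeg i) (m.le_degree (mem_support_iff.2 hi))
  have hreg :
      IsRegular (m.leadingCoeff (Polynomial.aeval (X i : MvPolynomial (Fin n) R) (h i))) := by
    rw [leadingCoeff_aeval_X, (hmonic i).leadingCoeff]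
    exact isRegular_one
  rw [m.degree_mul_of_isRegular_left hreg hqi, degree_aeval_X] at hdeg_eq
  refine ⟨i, ?_⟩
  rw [← hdeg_eq, Finsupp.add_apply, Finsupp.single_eq_same]
  exact Nat.le_add_right _ _

end GridIdeal

section Field

variable {K : Type*} [Field K]

def standardMonomials (m : MonomialOrder (Fin n)) (I : Ideal (MvPolynomial (Fin n) K)) :
    Set (Fin n →₀ ℕ) :=
  {u | monomial u (1 : K) ∉ leadTermIdeal m I}

section LeadTermIdeal

variable {m : MonomialOrder (Fin n)} {I : Ideal (MvPolynomial (Fin n) K)}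

theorem leadMonomial_eq_degree (f : MvPolynomial (Fin n) K) : leadMonomial m f = m.degree f := rfl

theorem monomial_mem_leadTermIdeal_iff {u : Fin n →₀ ℕ} :
    monomial u (1 : K) ∈ leadTermIdeal m I ↔ ∃ f ∈ I, f ≠ 0 ∧ m.degree f ≤ u := by
  classical
  have : {g | ∃ f ∈ I, f ≠ 0 ∧ g = monomial (leadMonomial m f) (1 : K)} =
      (monomial · 1) '' {a | ∃ f ∈ I, f ≠ 0 ∧ m.degree f = a} := by
    ext; simp [leadMonomial_eq_degree, eq_comm, and_assoc]
  rw [leadTermIdeal, this, mem_ideal_span_monomial_image, support_monomial, if_neg one_ne_zero]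
  simp [and_assoc]

theorem eq_zero_of_support_subset_standardMonomials {f : MvPolynomial (Fin n) K} (hf : f ∈ I)
    (hsupp : ↑f.support ⊆ standardMonomials m I) : f = 0 := by
  by_contra hf0
  exact hsupp (m.degree_mem_support hf0) (monomial_mem_leadTermIdeal_iff.2 ⟨f, hf, hf0, le_rfl⟩)

theorem ncard_standardMonomials_le_finrank [Module.Finite K (MvPolynomial (Fin n) K ⧸ I)] :
    (standardMonomials m I).ncard ≤ Module.finrank K (MvPolynomial (Fin n) K ⧸ I) := by
  let φ := (Ideal.Quotient.mkₐ K I).toLinearMap ∘ₗ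
    (restrictSupport K (standardMonomials m I)).subtype
  have hφ : Function.Injective φ := by
    rw [← LinearMap.ker_eq_bot, LinearMap.ker_eq_bot']
    rintro ⟨f, hf⟩ hφf
    have hfI : f ∈ I := Ideal.Quotient.eq_zero_iff_mem.1 hφf
    exact Subtype.ext (eq_zero_of_support_subset_standardMonomials hfI hf)
  rw [← Nat.card_coe_set_eq, ← Module.finrank_eq_nat_card_basis (basisRestrictSupport K _)]
  exact LinearMap.finrank_le_finrank_of_injective hφ

end LeadTermIdeal

section GridIdeal

variable {m : MonomialOrder (Fin n)} {h : Fin n → Polynomial K}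

theorem standardMonomials_subset_gridBox (hmonic : ∀ i, (h i).Monic)
    {I : Ideal (MvPolynomial (Fin n) K)} (hJI : gridIdeal h ≤ I) :
    standardMonomials m I ⊆ gridBox h := by
  intro u hu
  by_contra hbox
  obtain ⟨i, hi⟩ : ∃ i, (h i).natDegree ≤ u i := by simpa [gridBox] using hbox
  have hmon : monomial (u - Finsupp.single i (h i).natDegree) (1 : K) ≠ 0 :=
    monomial_eq_zero.not.2 one_ne_zero
  have hgen : Polynomial.aeval (X i : MvPolynomial (Fin n) K) (h i) ≠ 0 :=
    m.leadingCoeff_ne_zero_iff.1 <| by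
      rw [leadingCoeff_aeval_X, (hmonic i).leadingCoeff]
      exact one_ne_zero
  refine hu (monomial_mem_leadTermIdeal_iff.2 ⟨_, hJI (Ideal.mul_mem_left _ _
    (Ideal.subset_span ⟨i, rfl⟩)), mul_ne_zero hmon hgen, le_of_eq ?_⟩)
  classical
  rw [m.degree_mul hmon hgen, m.degree_monomial, if_neg one_ne_zero, degree_aeval_X,
    tsub_add_cancel_of_le (Finsupp.single_le_iff.2 hi)]

theorem tsub_mem_standardMonomials (hmonic : ∀ i, (h i).Monic)
    {I₁ I₂ : Ideal (MvPolynomial (Fin n) K)} (hle : I₁ ⊓ I₂ ≤ gridIdeal h) {s t : Fin n →₀ ℕ}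
    (hs : s ∈ gridBox h) (hts : t ≤ s) (ht : monomial t (1 : K) ∈ leadTermIdeal m I₁) :
    s - t ∈ standardMonomials m I₂ := by
  intro hst
  obtain ⟨f₁, hf₁, hf₁0, hdeg₁⟩ := monomial_mem_leadTermIdeal_iff.1 ht
  obtain ⟨f₂, hf₂, hf₂0, hdeg₂⟩ := monomial_mem_leadTermIdeal_iff.1 hst
  obtain ⟨i, hi⟩ := exists_natDegree_le_degree_of_mem_gridIdeal m hmonic
    (hle ⟨I₁.mul_mem_right f₂ hf₁, I₂.mul_mem_left f₁ hf₂⟩) (mul_ne_zero hf₁0 hf₂0)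
  rw [m.degree_mul hf₁0 hf₂0] at hi
  have hle_s : m.degree f₁ + m.degree f₂ ≤ s := add_tsub_cancel_of_le hts ▸ add_le_add hdeg₁ hdeg₂
  exact (hi.trans (hle_s i)).not_gt (hs i)

theorem surjective_mkₐ_comp_restrictSupport_gridBox (hmonic : ∀ i, (h i).Monic)
    {I : Ideal (MvPolynomial (Fin n) K)} (hJI : gridIdeal h ≤ I) :
    Function.Surjective
      ((Ideal.Quotient.mkₐ K I).toLinearMap ∘ₗ (restrictSupport K (gridBox h)).subtype) := by
  intro x
  obtain ⟨f, rfl⟩ := Ideal.Quotient.mkₐ_surjective K I x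
  obtain ⟨r, hfr, hr⟩ := exists_sub_mem_gridIdeal_of_support_subset_gridBox hmonic f
  exact ⟨⟨r, hr⟩, (Ideal.Quotient.mkₐ_eq_mk K I ▸ Ideal.Quotient.eq.2 (hJI hfr)).symm⟩

theorem finite_quotient_of_gridIdeal_le (hmonic : ∀ i, (h i).Monic)
    {I : Ideal (MvPolynomial (Fin n) K)} (hJI : gridIdeal h ≤ I) :
    Module.Finite K (MvPolynomial (Fin n) K ⧸ I) :=
  have := (finite_gridBox h).to_subtype
  have := Module.Finite.of_basis (basisRestrictSupport K (gridBox h))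
  Module.Finite.of_surjective _ (surjective_mkₐ_comp_restrictSupport_gridBox hmonic hJI)

theorem finrank_quotient_gridIdeal_le (hmonic : ∀ i, (h i).Monic) :
    Module.finrank K (MvPolynomial (Fin n) K ⧸ gridIdeal h) ≤ (gridBox h).ncard := by
  have := (finite_gridBox h).to_subtype
  have := Module.Finite.of_basis (basisRestrictSupport K (gridBox h))
  rw [← Nat.card_coe_set_eq, ← Module.finrank_eq_nat_card_basis (basisRestrictSupport K _)]
  exact LinearMap.finrank_le_finrank_of_surjective
    (surjective_mkₐ_comp_restrictSupport_gridBox hmonic le_rfl)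

theorem ncard_standardMonomials_add_ncard_standardMonomials_le (hmonic : ∀ i, (h i).Monic)
    {I₁ I₂ : Ideal (MvPolynomial (Fin n) K)} (hinf : I₁ ⊓ I₂ = gridIdeal h)
    (hcop : IsCoprime I₁ I₂) :
    (standardMonomials m I₁).ncard + (standardMonomials m I₂).ncard ≤ (gridBox h).ncard := by
  have := finite_quotient_of_gridIdeal_le hmonic (hinf ▸ inf_le_left : gridIdeal h ≤ I₁)
  have := finite_quotient_of_gridIdeal_le hmonic (hinf ▸ inf_le_right : gridIdeal h ≤ I₂)
  calc (standardMonomials m I₁).ncard + (standardMonomials m I₂).ncard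
      ≤ Module.finrank K (MvPolynomial (Fin n) K ⧸ I₁) +
          Module.finrank K (MvPolynomial (Fin n) K ⧸ I₂) :=
        add_le_add ncard_standardMonomials_le_finrank ncard_standardMonomials_le_finrank
    _ = Module.finrank K (MvPolynomial (Fin n) K ⧸ gridIdeal h) := by
        rw [← hinf, finrank_quotient_inf_eq_add hcop]
    _ ≤ (gridBox h).ncard := finrank_quotient_gridIdeal_le hmonic

theorem bijOn_tsub_gridBox_diff_standardMonomials (hmonic : ∀ i, (h i).Monic)
    {I₁ I₂ : Ideal (MvPolynomial (Fin n) K)} (hinf : I₁ ⊓ I₂ = gridIdeal h)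
    (hcop : IsCoprime I₁ I₂) {s : Fin n →₀ ℕ} (hbox : gridBox h = Set.Iic s) :
    Set.BijOn (s - ·) (gridBox h \ standardMonomials m I₁) (standardMonomials m I₂) := by
  have hstd₁ := standardMonomials_subset_gridBox (m := m) hmonic (hinf ▸ inf_le_left)
  have hstd₂ := standardMonomials_subset_gridBox (m := m) hmonic (hinf ▸ inf_le_right)
  have hle : ∀ t ∈ gridBox h \ standardMonomials m I₁, t ≤ s :=
    fun t ht => Set.mem_Iic.1 (hbox ▸ ht.1)
  have hmaps : Set.MapsTo (s - ·) (gridBox h \ standardMonomials m I₁) (standardMonomials m I₂) :=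
    fun t ht => tsub_mem_standardMonomials hmonic hinf.le (hbox ▸ le_refl s) (hle t ht)
      (not_not.1 ht.2)
  have hinj : Set.InjOn (s - ·) (gridBox h \ standardMonomials m I₁) := fun t₁ ht₁ t₂ ht₂ heq => by
    rw [← tsub_tsub_cancel_of_le (hle t₁ ht₁), ← tsub_tsub_cancel_of_le (hle t₂ ht₂)]
    exact congrArg (s - ·) heq
  refine ⟨hmaps, hinj, Set.surjOn_of_injOn_of_ncard_le hmaps hinj ?_
    ((finite_gridBox h).subset hstd₂)⟩
  have := ncard_standardMonomials_add_ncard_standardMonomials_le (m := m) hmonic hinf hcop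
  rw [Set.ncard_sdiff hstd₁ ((finite_gridBox h).subset hstd₁)]
  omega

end GridIdeal

end Field

/-- For complementary ideals `I₁, I₂` with respect to a grid ideal `J`, the map
`t ↦ s - t` (where `s` is the exponent vector of the socle monomial of `J`) is a
bijection from the monomials under `s` lying in `LT_σ(I₁)` onto the monomials
outside `LT_σ(I₂)`. -/
theorem complementary_ideals_socle_bijection
    {n : ℕ} {K : Type*} [Field K]
    (h : Fin n → Polynomial K) (d : Fin n → ℕ)
    (hmonic : ∀ i, (h i).Monic) (hdeg : ∀ i, (h i).natDegree = d i)
    (hd : ∀ i, 1 ≤ d i)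
    (g : Fin n → MvPolynomial (Fin n) K)
    (hg : ∀ i, g i = Polynomial.aeval (X i) (h i))
    (J : Ideal (MvPolynomial (Fin n) K)) (hJ : J = Ideal.span (Set.range g))
    (s : Fin n →₀ ℕ) (hs : ∀ i, s i = d i - 1)
    (I₁ I₂ : Ideal (MvPolynomial (Fin n) K))
    (hinf : I₁ ⊓ I₂ = J) (hsup : I₁ + I₂ = ⊤)
    (m : MonomialOrder (Fin n)) :
    Set.BijOn (fun t => s - t)
      {t : Fin n →₀ ℕ | t ≤ s ∧ monomial t (1 : K) ∈ leadTermIdeal m I₁}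
      {u : Fin n →₀ ℕ | monomial u (1 : K) ∉ leadTermIdeal m I₂} := by
  obtain rfl : J = gridIdeal h := by rw [hJ, funext hg]; rfl
  have hbox : gridBox h = Set.Iic s := by
    ext u
    simp only [Set.mem_Iic, gridBox, Set.mem_ofPred_eq, Finsupp.le_def, hs, hdeg]
    exact forall_congr' fun i => by have := hd i; omega
  have hcop : IsCoprime I₁ I₂ := Ideal.isCoprime_iff_add.2 (hsup.trans Ideal.one_eq_top.symm)
  have hsource : {t | t ≤ s ∧ monomial t (1 : K) ∈ leadTermIdeal m I₁} =
      gridBox h \ standardMonomials m I₁ := by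
    ext t
    simp [hbox, standardMonomials]
  rw [hsource]
  exact bijOn_tsub_gridBox_diff_standardMonomials hmonic hinf hcop hbox
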